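/- arXiv:1811.06774 — 9 statements merged into one kernel-verified Lean document; each statement's English description precedes it below -/
import Mathlib

section
/- Under the stated hypotheses, ℓ(u₂) − ℓ(u₁) = (B₁(u₂, u₂) − B₂(u₂, u₂)) − B₁(u₁ − u₂, u₁ − u₂). -/
namespace LinearMap

variable {R M : Type*} [CommRing R] [AddCommGroup M] [Module R M]

theorem apply_sub_sub_eq_of_comm (B : M →ₗ[R] M →ₗ[R] R) {x y : M} (hxy : B y x = B x y) :
    B (x - y) (x - y) = B x x - 2 * B x y + B y y := by
  simp only [map_sub, sub_apply, hxy]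
  ring

theorem apply_sub_sub_eq_of_forall_apply_eq (B : M →ₗ[R] M →ₗ[R] R) (ℓ : M →ₗ[R] R) {u w : M}
    (hu : ∀ v, B u v = ℓ v) (huw : B w u = B u w) :
    B (u - w) (u - w) = ℓ u - 2 * ℓ w + B w w := by
  rw [apply_sub_sub_eq_of_comm B huw, hu, hu]

end LinearMap

theorem eit_variational_identity_general {H : Type*} [AddCommGroup H] [Module ℝ H]
    (B₁ B₂ : H →ₗ[ℝ] H →ₗ[ℝ] ℝ)
    (hB₁symm : ∀ u v, B₁ u v = B₁ v u)
    (ℓ : H →ₗ[ℝ] ℝ) (u₁ u₂ : H)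
    (hu₁ : ∀ v, B₁ u₁ v = ℓ v) (hu₂ : ∀ v, B₂ u₂ v = ℓ v) :
    ℓ u₂ - ℓ u₁ = (B₁ u₂ u₂ - B₂ u₂ u₂) - B₁ (u₁ - u₂) (u₁ - u₂) := by
  rw [LinearMap.apply_sub_sub_eq_of_forall_apply_eq B₁ ℓ hu₁ (hB₁symm u₂ u₁), hu₂]
  ring

/-- Abstract variational identity behind the monotonicity inequality for the complete
electrode model in EIT. -/
theorem eit_variational_identity {H : Type*} [AddCommGroup H] [Module ℝ H]
    (B₁ B₂ : H →ₗ[ℝ] H →ₗ[ℝ] ℝ)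
    (hB₁symm : ∀ u v, B₁ u v = B₁ v u) (hB₂symm : ∀ u v, B₂ u v = B₂ v u)
    (ℓ : H →ₗ[ℝ] ℝ) (u₁ u₂ : H)
    (hu₁ : ∀ v, B₁ u₁ v = ℓ v) (hu₂ : ∀ v, B₂ u₂ v = ℓ v) :
    ℓ u₂ - ℓ u₁ = (B₁ u₂ u₂ - B₂ u₂ u₂) - B₁ (u₁ - u₂) (u₁ - u₂) :=
  eit_variational_identity_general B₁ B₂ hB₁symm ℓ u₁ u₂ hu₁ hu₂
end

section
/- Under the stated hypotheses, if in addition B₁ is positive semidefinite, then ℓ(u₂) − ℓ(u₁) ≤ B₁(u₂, u₂) − B₂(u₂, u₂). -/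
/-! Testing the equation of `u₁` against `u₁` and `u₂` gives
`B₁ (u₂ - u₁) (u₂ - u₁) = B₁ u₂ u₂ - 2 ℓ u₂ + ℓ u₁`, and testing the equation of `u₂` against `u₂`
gives `B₂ u₂ u₂ = ℓ u₂`; the inequality is then `0 ≤ B₁ (u₂ - u₁) (u₂ - u₁)`. -/

theorem LinearMap.apply_sub_sub_of_symm {R M : Type*} [CommRing R] [AddCommGroup M] [Module R M]
    (B : M →ₗ[R] M →ₗ[R] R) (hB : ∀ u v, B u v = B v u) (u v : M) :
    B (v - u) (v - u) = B v v - 2 * B u v + B u u := by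
  simp only [map_sub, LinearMap.sub_apply, hB v u]
  ring

theorem eit_monotonicity_upper_bound_general {H : Type*} [AddCommGroup H] [Module ℝ H]
    (B₁ B₂ : H →ₗ[ℝ] H →ₗ[ℝ] ℝ)
    (hB₁symm : ∀ u v, B₁ u v = B₁ v u)
    (ℓ : H →ₗ[ℝ] ℝ) (u₁ u₂ : H)
    (hu₁ : ∀ v, B₁ u₁ v = ℓ v) (hu₂ : ∀ v, B₂ u₂ v = ℓ v)
    (hB₁pos : ∀ v, 0 ≤ B₁ v v) :
    ℓ u₂ - ℓ u₁ ≤ B₁ u₂ u₂ - B₂ u₂ u₂ := by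
  calc ℓ u₂ - ℓ u₁ ≤ ℓ u₂ - ℓ u₁ + B₁ (u₂ - u₁) (u₂ - u₁) := le_add_of_nonneg_right (hB₁pos _)
    _ = B₁ u₂ u₂ - B₂ u₂ u₂ := by
      rw [B₁.apply_sub_sub_of_symm hB₁symm, hu₁, hu₁, ← hu₂ u₂]
      ring

/-- Abstract form of the upper-bound inequality of the monotonicity inequality
(Theorem 2) for the complete electrode model in EIT. -/
theorem eit_monotonicity_upper_bound {H : Type*} [AddCommGroup H] [Module ℝ H]
    (B₁ B₂ : H →ₗ[ℝ] H →ₗ[ℝ] ℝ)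
    (hB₁symm : ∀ u v, B₁ u v = B₁ v u) (hB₂symm : ∀ u v, B₂ u v = B₂ v u)
    (ℓ : H →ₗ[ℝ] ℝ) (u₁ u₂ : H)
    (hu₁ : ∀ v, B₁ u₁ v = ℓ v) (hu₂ : ∀ v, B₂ u₂ v = ℓ v)
    (hB₁pos : ∀ v, 0 ≤ B₁ v v) :
    ℓ u₂ - ℓ u₁ ≤ B₁ u₂ u₂ - B₂ u₂ u₂ :=
  eit_monotonicity_upper_bound_general B₁ B₂ hB₁symm ℓ u₁ u₂ hu₁ hu₂ hB₁pos
end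

section
/- Under the stated hypotheses, ℓ(u₂) − ℓ(u₁) = B₂(u₂ − u₁, u₂ − u₁) + (B₁(u₁, u₁) − B₂(u₁, u₁)). -/
theorem eit_variational_identity'_general {H : Type*} [AddCommGroup H] [Module ℝ H]
    (B₁ B₂ : H →ₗ[ℝ] H →ₗ[ℝ] ℝ)
    (hB₂symm : ∀ u v, B₂ u v = B₂ v u)
    (ℓ : H →ₗ[ℝ] ℝ) (u₁ u₂ : H)
    (hu₁ : ∀ v, B₁ u₁ v = ℓ v) (hu₂ : ∀ v, B₂ u₂ v = ℓ v) :
    ℓ u₂ - ℓ u₁ = B₂ (u₂ - u₁) (u₂ - u₁) + (B₁ u₁ u₁ - B₂ u₁ u₁) := by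
  -- Testing each equation with the other solution: both cross terms `B₂ u₂ u₁`, `B₂ u₁ u₂` equal `ℓ u₁`.
  have hcross : B₂ u₁ u₂ = ℓ u₁ := by rw [hB₂symm, hu₂]
  simp only [map_sub, LinearMap.sub_apply]
  linear_combination (hu₂ u₂).symm + hu₂ u₁ + hcross - hu₁ u₁

/-- Abstract variational identity (with interchanged roles of the forms) behind the
lower-bound inequality of the monotonicity inequality for EIT. -/
theorem eit_variational_identity' {H : Type*} [AddCommGroup H] [Module ℝ H]
    (B₁ B₂ : H →ₗ[ℝ] H →ₗ[ℝ] ℝ)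
    (hB₁symm : ∀ u v, B₁ u v = B₁ v u) (hB₂symm : ∀ u v, B₂ u v = B₂ v u)
    (ℓ : H →ₗ[ℝ] ℝ) (u₁ u₂ : H)
    (hu₁ : ∀ v, B₁ u₁ v = ℓ v) (hu₂ : ∀ v, B₂ u₂ v = ℓ v) :
    ℓ u₂ - ℓ u₁ = B₂ (u₂ - u₁) (u₂ - u₁) + (B₁ u₁ u₁ - B₂ u₁ u₁) :=
  eit_variational_identity'_general B₁ B₂ hB₂symm ℓ u₁ u₂ hu₁ hu₂
end

section
/- Under the stated hypotheses, if in addition B₁ is positive semidefinite and B₂(v, v) ≥ B₁(v, v) for all v ∈ H, then ℓ(u₂) ≤ ℓ(u₁). -/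
/-!
The solution `u` of `B u = ℓ` maximises the energy functional `v ↦ 2 ℓ v - B v v`, since
`ℓ u - (2 ℓ v - B v v) = B (u - v) (u - v) ≥ 0`. Testing the maximality of `u₁` for `B₁` with
`v = u₂` and using `B₁ u₂ u₂ ≤ B₂ u₂ u₂ = ℓ u₂` gives `ℓ u₂ ≤ ℓ u₁`.
-/

theorem two_mul_sub_apply_self_le_of_apply_eq {R M : Type*} [CommRing R] [LinearOrder R]
    [IsStrictOrderedRing R] [AddCommGroup M] [Module R M] {B : M →ₗ[R] M →ₗ[R] R}
    (hB : ∀ u v, B u v = B v u) (hB_nonneg : ∀ v, 0 ≤ B v v) {ℓ : M →ₗ[R] R} {u : M}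
    (hu : ∀ v, B u v = ℓ v) (v : M) :
    2 * ℓ v - B v v ≤ ℓ u := by
  have hexpand : B (u - v) (u - v) = ℓ u - (2 * ℓ v - B v v) := by
    simp only [map_sub, LinearMap.sub_apply, hu, hB v u]
    ring
  linarith [hB_nonneg (u - v)]

theorem eit_monotonicity_relation_general {H : Type*} [AddCommGroup H] [Module ℝ H]
    (B₁ B₂ : H →ₗ[ℝ] H →ₗ[ℝ] ℝ)
    (hB₁symm : ∀ u v, B₁ u v = B₁ v u)
    (ℓ : H →ₗ[ℝ] ℝ) (u₁ u₂ : H)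
    (hu₁ : ∀ v, B₁ u₁ v = ℓ v) (hu₂ : ∀ v, B₂ u₂ v = ℓ v)
    (hB₁pos : ∀ v, 0 ≤ B₁ v v) (hle : ∀ v, B₁ v v ≤ B₂ v v) :
    ℓ u₂ ≤ ℓ u₁ :=
  calc ℓ u₂ = 2 * ℓ u₂ - B₂ u₂ u₂ := by rw [hu₂]; ring
    _ ≤ 2 * ℓ u₂ - B₁ u₂ u₂ := sub_le_sub_left (hle u₂) _
    _ ≤ ℓ u₁ := two_mul_sub_apply_self_le_of_apply_eq hB₁symm hB₁pos hu₁ u₂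

/-- Abstract form of the monotonicity relation (Theorem 1) for EIT:
a larger energy form yields smaller measurements. -/
theorem eit_monotonicity_relation {H : Type*} [AddCommGroup H] [Module ℝ H]
    (B₁ B₂ : H →ₗ[ℝ] H →ₗ[ℝ] ℝ)
    (hB₁symm : ∀ u v, B₁ u v = B₁ v u) (hB₂symm : ∀ u v, B₂ u v = B₂ v u)
    (ℓ : H →ₗ[ℝ] ℝ) (u₁ u₂ : H)
    (hu₁ : ∀ v, B₁ u₁ v = ℓ v) (hu₂ : ∀ v, B₂ u₂ v = ℓ v)
    (hB₁pos : ∀ v, 0 ≤ B₁ v v) (hle : ∀ v, B₁ v v ≤ B₂ v v) :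
    ℓ u₂ ≤ ℓ u₁ :=
  eit_monotonicity_relation_general B₁ B₂ hB₁symm ℓ u₁ u₂ hu₁ hu₂ hB₁pos hle
end

section
/- Under the stated hypotheses, if w₁(k) > 0 and w₂(k) ≥ 0 for all k ∈ ι, then ℓ(u₂) − ℓ(u₁) ≥ ∑_{k∈ι} (w₂(k)/w₁(k))·(w₁(k) − w₂(k))·‖g k u₂‖². -/
/-!
Testing the weak equations with `u₁` and `u₂` gives
`ℓ u₂ - ℓ u₁ = ∑ k, (w₂‖g k u₂‖² - 2 w₂⟪g k u₂, g k u₁⟫ + w₁‖g k u₁‖²)`, and completing the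
square, each summand equals `w₁‖g k u₁ - (w₂/w₁) g k u₂‖² + (w₂/w₁)(w₁ - w₂)‖g k u₂‖²`.
-/

open scoped RealInnerProductSpace

lemma weighted_quadratic_eq_norm_sq_add {E : Type*} [NormedAddCommGroup E]
    [InnerProductSpace ℝ E] {w₁ : ℝ} (hw₁ : w₁ ≠ 0) (w₂ : ℝ) (a b : E) :
    w₂ * ‖b‖ ^ 2 - 2 * (w₂ * ⟪b, a⟫) + w₁ * ‖a‖ ^ 2
      = w₁ * ‖a - (w₂ / w₁) • b‖ ^ 2 + (w₂ / w₁) * (w₁ - w₂) * ‖b‖ ^ 2 := by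
  rw [norm_sub_sq_real, inner_smul_right, norm_smul, mul_pow, Real.norm_eq_abs, sq_abs,
    real_inner_comm]
  field_simp
  ring

lemma le_weighted_quadratic {E : Type*} [NormedAddCommGroup E] [InnerProductSpace ℝ E]
    {w₁ : ℝ} (hw₁ : 0 < w₁) (w₂ : ℝ) (a b : E) :
    (w₂ / w₁) * (w₁ - w₂) * ‖b‖ ^ 2 ≤ w₂ * ‖b‖ ^ 2 - 2 * (w₂ * ⟪b, a⟫) + w₁ * ‖a‖ ^ 2 := by
  rw [weighted_quadratic_eq_norm_sq_add hw₁.ne' w₂ a b]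
  have : 0 ≤ w₁ * ‖a - (w₂ / w₁) • b‖ ^ 2 := by positivity
  linarith

lemma sub_eq_sum_of_weak_solutions {H E : Type*} [AddCommGroup H] [Module ℝ H]
    [NormedAddCommGroup E] [InnerProductSpace ℝ E] {ι : Type*} [Fintype ι]
    {g : ι → H →ₗ[ℝ] E} {w₁ w₂ : ι → ℝ} {ℓ : H →ₗ[ℝ] ℝ} {u₁ u₂ : H}
    (hu₁ : ∑ k, w₁ k * ⟪g k u₁, g k u₁⟫ = ℓ u₁)
    (hu₂ : ∀ v, ∑ k, w₂ k * ⟪g k u₂, g k v⟫ = ℓ v) :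
    ℓ u₂ - ℓ u₁ = ∑ k, (w₂ k * ‖g k u₂‖ ^ 2 - 2 * (w₂ k * ⟪g k u₂, g k u₁⟫)
      + w₁ k * ‖g k u₁‖ ^ 2) := by
  simp only [← real_inner_self_eq_norm_sq]
  rw [Finset.sum_add_distrib, Finset.sum_sub_distrib, ← Finset.mul_sum, hu₂, hu₂, hu₁]
  ring

theorem eit_discrete_monotonicity_lower_bound_general {H E : Type*} [AddCommGroup H] [Module ℝ H]
    [NormedAddCommGroup E] [InnerProductSpace ℝ E] {ι : Type*} [Fintype ι]
    (g : ι → H →ₗ[ℝ] E) (w₁ w₂ : ι → ℝ) (ℓ : H →ₗ[ℝ] ℝ) (u₁ u₂ : H)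
    (hu₁ : ∀ v, ∑ k, w₁ k * ⟪g k u₁, g k v⟫ = ℓ v)
    (hu₂ : ∀ v, ∑ k, w₂ k * ⟪g k u₂, g k v⟫ = ℓ v)
    (hw₁ : ∀ k, 0 < w₁ k) :
    ℓ u₂ - ℓ u₁ ≥ ∑ k, (w₂ k / w₁ k) * (w₁ k - w₂ k) * ‖g k u₂‖ ^ 2 := by
  rw [sub_eq_sum_of_weak_solutions (hu₁ u₁) hu₂]
  exact Finset.sum_le_sum fun k _ => le_weighted_quadratic (hw₁ k) (w₂ k) _ _

/-- Abstract (discretized) form of the lower-bound inequality of the monotonicity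
inequality (Theorem 2) for the complete electrode model in EIT. -/
theorem eit_discrete_monotonicity_lower_bound {H E : Type*} [AddCommGroup H] [Module ℝ H]
    [NormedAddCommGroup E] [InnerProductSpace ℝ E] {ι : Type*} [Fintype ι]
    (g : ι → H →ₗ[ℝ] E) (w₁ w₂ : ι → ℝ) (ℓ : H →ₗ[ℝ] ℝ) (u₁ u₂ : H)
    (hu₁ : ∀ v, ∑ k, w₁ k * ⟪g k u₁, g k v⟫ = ℓ v)
    (hu₂ : ∀ v, ∑ k, w₂ k * ⟪g k u₂, g k v⟫ = ℓ v)
    (hw₁ : ∀ k, 0 < w₁ k) (hw₂ : ∀ k, 0 ≤ w₂ k) :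
    ℓ u₂ - ℓ u₁ ≥ ∑ k, (w₂ k / w₁ k) * (w₁ k - w₂ k) * ‖g k u₂‖ ^ 2 :=
  eit_discrete_monotonicity_lower_bound_general g w₁ w₂ ℓ u₁ u₂ hu₁ hu₂ hw₁
end

section
/- Under the stated hypotheses, if w₁(k) ≥ 0 for all k ∈ ι, then ℓ(u₂) − ℓ(u₁) ≤ ∑_{k∈ι} (w₁(k) − w₂(k))·‖g k u₂‖². -/
/-!
The solution `u` of `B u = ℓ` for a positive semidefinite symmetric form `B` maximises
`x ↦ 2 ℓ x - B x x` (Dirichlet's principle), since the defect is `B (x - u) (x - u) ≥ 0`.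
Testing this for `B = B_{w₁}`, `u = u₁` at `x = u₂`, and using `B_{w₂} u₂ u₂ = ℓ u₂`, gives
`ℓ u₂ - ℓ u₁ ≤ B_{w₁} u₂ u₂ - B_{w₂} u₂ u₂ = B_{w₁ - w₂} u₂ u₂`.
-/

open scoped RealInnerProductSpace

namespace LinearMap.BilinForm

theorem IsPosSemidef.two_mul_sub_apply_self_le {R M : Type*} [CommRing R] [PartialOrder R]
    [IsOrderedRing R] [AddCommGroup M] [Module R M] {B : LinearMap.BilinForm R M}
    (hB : B.IsPosSemidef) {ℓ : M →ₗ[R] R} {u : M} (hu : B u = ℓ) (x : M) :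
    2 * ℓ x - B x x ≤ ℓ u := by
  have hdefect : ℓ u - (2 * ℓ x - B x x) = B (x - u) (x - u) := by
    have hxu : B x u = ℓ x := by rw [hB.isSymm.eq, hu]
    simp only [map_sub, LinearMap.sub_apply, hxu, hu]
    ring
  exact sub_nonneg.mp (hdefect ▸ hB.isNonneg.nonneg (x - u))

end LinearMap.BilinForm

section WeightedInnerForm

variable {H E ι : Type*} [AddCommGroup H] [Module ℝ H] [NormedAddCommGroup E]
  [InnerProductSpace ℝ E] [Fintype ι]

noncomputable def weightedInnerForm (g : ι → H →ₗ[ℝ] E) (w : ι → ℝ) :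
    LinearMap.BilinForm ℝ H :=
  ∑ k, w k • (innerₗ E).compl₁₂ (g k) (g k)

theorem weightedInnerForm_apply (g : ι → H →ₗ[ℝ] E) (w : ι → ℝ) (u v : H) :
    weightedInnerForm g w u v = ∑ k, w k * ⟪g k u, g k v⟫ := by
  simp [weightedInnerForm]

theorem weightedInnerForm_apply_self (g : ι → H →ₗ[ℝ] E) (w : ι → ℝ) (u : H) :
    weightedInnerForm g w u u = ∑ k, w k * ‖g k u‖ ^ 2 := by
  simp only [weightedInnerForm_apply, real_inner_self_eq_norm_sq]

theorem weightedInnerForm_sub (g : ι → H →ₗ[ℝ] E) (w₁ w₂ : ι → ℝ) :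
    weightedInnerForm g (w₁ - w₂) = weightedInnerForm g w₁ - weightedInnerForm g w₂ := by
  ext u v
  simp only [LinearMap.sub_apply, weightedInnerForm_apply, Pi.sub_apply, sub_mul,
    Finset.sum_sub_distrib]

theorem isPosSemidef_weightedInnerForm (g : ι → H →ₗ[ℝ] E) {w : ι → ℝ} (hw : ∀ k, 0 ≤ w k) :
    (weightedInnerForm g w).IsPosSemidef := by
  refine LinearMap.BilinForm.isPosSemidef_def.2 ⟨⟨fun u v => ?_⟩, ⟨fun u => ?_⟩⟩
  · simp only [weightedInnerForm_apply, real_inner_comm]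
  · rw [weightedInnerForm_apply_self]
    exact Finset.sum_nonneg fun k _ => mul_nonneg (hw k) (sq_nonneg _)

end WeightedInnerForm

/-- Abstract (discretized) form of the upper-bound inequality of the monotonicity
inequality (Theorem 2) for the complete electrode model in EIT. -/
theorem eit_discrete_monotonicity_upper_bound {H E : Type*} [AddCommGroup H] [Module ℝ H]
    [NormedAddCommGroup E] [InnerProductSpace ℝ E] {ι : Type*} [Fintype ι]
    (g : ι → H →ₗ[ℝ] E) (w₁ w₂ : ι → ℝ) (ℓ : H →ₗ[ℝ] ℝ) (u₁ u₂ : H)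
    (hu₁ : ∀ v, ∑ k, w₁ k * ⟪g k u₁, g k v⟫ = ℓ v)
    (hu₂ : ∀ v, ∑ k, w₂ k * ⟪g k u₂, g k v⟫ = ℓ v)
    (hw₁ : ∀ k, 0 ≤ w₁ k) :
    ℓ u₂ - ℓ u₁ ≤ ∑ k, (w₁ k - w₂ k) * ‖g k u₂‖ ^ 2 := by
  have hsol₁ : weightedInnerForm g w₁ u₁ = ℓ :=
    LinearMap.ext fun v => (weightedInnerForm_apply g w₁ u₁ v).trans (hu₁ v)
  have hdirichlet := (isPosSemidef_weightedInnerForm g hw₁).two_mul_sub_apply_self_le hsol₁ u₂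
  have henergy₂ : weightedInnerForm g w₂ u₂ u₂ = ℓ u₂ :=
    (weightedInnerForm_apply g w₂ u₂ u₂).trans (hu₂ u₂)
  calc ℓ u₂ - ℓ u₁ ≤ weightedInnerForm g w₁ u₂ u₂ - weightedInnerForm g w₂ u₂ u₂ := by
        linarith
    _ = weightedInnerForm g (w₁ - w₂) u₂ u₂ := by rw [weightedInnerForm_sub]; rfl
    _ = ∑ k, (w₁ k - w₂ k) * ‖g k u₂‖ ^ 2 := weightedInnerForm_apply_self g (w₁ - w₂) u₂
end

section
/- Under the stated hypotheses, suppose s₀ > 0, s_max > 0, c ≥ 0, the weight w₂ is constant equal to s₀, and the weight w₁ satisfies s₀ ≤ w₁(k) ≤ s_max for all k ∈ ι and w₁(k) − s₀ ≥ c for all k in a subset S ⊆ ι. Then ℓ(u₂) − ℓ(u₁) ≥ (s₀·c/s_max)·∑_{k∈S} ‖g k u₂‖². -/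
/-!
Testing the two variational equations against `u₁` and `u₂` gives the energy identity
`ℓ u₂ - ℓ u₁ = ∑ₖ w₂ₖ ‖gₖ u₂ - gₖ u₁‖² + (w₁ₖ - w₂ₖ) ‖gₖ u₁‖²`, whose terms are all nonnegative.
On each `k ∈ S`, minimizing `p ‖y - x‖² + q ‖x‖²` over `x` bounds the term below by
`pq/(p+q) ‖gₖ u₂‖²` with `p = s₀`, `q = w₁ₖ - s₀ ≥ c`, `p + q = w₁ₖ ≤ s_max`.
-/

open scoped RealInnerProductSpace

section Energy

variable {H E ι : Type*} [AddCommGroup H] [Module ℝ H] [NormedAddCommGroup E]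
  [InnerProductSpace ℝ E] [Fintype ι]

theorem sub_eq_sum_weighted_energy (g : ι → H →ₗ[ℝ] E) (w₁ w₂ : ι → ℝ) (ℓ : H →ₗ[ℝ] ℝ)
    {u₁ u₂ : H} (hu₁ : ∀ v, ∑ k, w₁ k * ⟪g k u₁, g k v⟫ = ℓ v)
    (hu₂ : ∀ v, ∑ k, w₂ k * ⟪g k u₂, g k v⟫ = ℓ v) :
    ℓ u₂ - ℓ u₁ = ∑ k, (w₂ k * ‖g k u₂ - g k u₁‖ ^ 2 + (w₁ k - w₂ k) * ‖g k u₁‖ ^ 2) := by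
  have hterm : ∀ k, w₂ k * ‖g k u₂ - g k u₁‖ ^ 2 + (w₁ k - w₂ k) * ‖g k u₁‖ ^ 2
      = w₂ k * ⟪g k u₂, g k u₂⟫ - 2 * (w₂ k * ⟪g k u₂, g k u₁⟫) + w₁ k * ⟪g k u₁, g k u₁⟫ := by
    intro k
    rw [norm_sub_sq_real, ← real_inner_self_eq_norm_sq, ← real_inner_self_eq_norm_sq]
    ring
  rw [Finset.sum_congr rfl fun k _ ↦ hterm k, Finset.sum_add_distrib, Finset.sum_sub_distrib,
    ← Finset.mul_sum, hu₂ u₂, hu₂ u₁, hu₁ u₁]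
  ring

end Energy

section Pointwise

variable {E : Type*} [NormedAddCommGroup E] [InnerProductSpace ℝ E]

theorem add_mul_weighted_norm_sq_sub_eq_norm_sq (p q : ℝ) (x y : E) :
    (p + q) * (p * ‖y - x‖ ^ 2 + q * ‖x‖ ^ 2) - p * q * ‖y‖ ^ 2 = ‖(p + q) • x - p • y‖ ^ 2 := by
  rw [norm_sub_sq_real, norm_sub_sq_real, norm_smul, norm_smul, real_inner_smul_left,
    real_inner_smul_right, real_inner_comm, mul_pow, mul_pow, Real.norm_eq_abs,
    Real.norm_eq_abs, sq_abs, sq_abs]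
  ring

theorem mul_div_add_mul_norm_sq_le {p q : ℝ} (hpq : 0 < p + q) (x y : E) :
    p * q / (p + q) * ‖y‖ ^ 2 ≤ p * ‖y - x‖ ^ 2 + q * ‖x‖ ^ 2 := by
  rw [div_mul_eq_mul_div, div_le_iff₀ hpq, mul_comm _ (p + q), ← sub_nonneg,
    add_mul_weighted_norm_sq_sub_eq_norm_sq]
  positivity

theorem mul_div_norm_sq_le_of_contrast {s₀ s_max c a : ℝ} (hs₀ : 0 < s₀) (ha : s₀ ≤ a)
    (ha' : a ≤ s_max) (hca : c ≤ a - s₀) (x y : E) :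
    s₀ * c / s_max * ‖y‖ ^ 2 ≤ s₀ * ‖y - x‖ ^ 2 + (a - s₀) * ‖x‖ ^ 2 := by
  have ha₀ : 0 < a := hs₀.trans_le ha
  have hcoeff : s₀ * c / s_max ≤ s₀ * (a - s₀) / (s₀ + (a - s₀)) := by
    rw [add_sub_cancel, div_le_div_iff₀ (ha₀.trans_le ha') ha₀, mul_assoc, mul_assoc]
    gcongr  -- factorwise: `c ≤ a - s₀` and `a ≤ s_max`
  calc s₀ * c / s_max * ‖y‖ ^ 2 ≤ s₀ * (a - s₀) / (s₀ + (a - s₀)) * ‖y‖ ^ 2 := by gcongr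
    _ ≤ _ := mul_div_add_mul_norm_sq_le (by linarith) x y

end Pointwise

theorem eit_linearized_test_estimate_general {H E : Type*} [AddCommGroup H] [Module ℝ H]
    [NormedAddCommGroup E] [InnerProductSpace ℝ E] {ι : Type*} [Fintype ι]
    (g : ι → H →ₗ[ℝ] E) (w₁ w₂ : ι → ℝ) (ℓ : H →ₗ[ℝ] ℝ) (u₁ u₂ : H)
    (hu₁ : ∀ v, ∑ k, w₁ k * ⟪g k u₁, g k v⟫ = ℓ v)
    (hu₂ : ∀ v, ∑ k, w₂ k * ⟪g k u₂, g k v⟫ = ℓ v)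
    (s₀ s_max c : ℝ) (hs₀ : 0 < s₀)
    (hw₂ : ∀ k, w₂ k = s₀)
    (hw₁l : ∀ k, s₀ ≤ w₁ k) (hw₁u : ∀ k, w₁ k ≤ s_max)
    (S : Finset ι) (hS : ∀ k ∈ S, w₁ k - s₀ ≥ c) :
    ℓ u₂ - ℓ u₁ ≥ (s₀ * c / s_max) * ∑ k ∈ S, ‖g k u₂‖ ^ 2 := by
  rw [ge_iff_le, sub_eq_sum_weighted_energy g w₁ w₂ ℓ hu₁ hu₂, Finset.mul_sum]
  simp only [hw₂]
  calc ∑ k ∈ S, s₀ * c / s_max * ‖g k u₂‖ ^ 2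
      ≤ ∑ k ∈ S, (s₀ * ‖g k u₂ - g k u₁‖ ^ 2 + (w₁ k - s₀) * ‖g k u₁‖ ^ 2) :=
        Finset.sum_le_sum fun k hk ↦
          mul_div_norm_sq_le_of_contrast hs₀ (hw₁l k) (hw₁u k) (hS k hk) _ _
    _ ≤ ∑ k, (s₀ * ‖g k u₂ - g k u₁‖ ^ 2 + (w₁ k - s₀) * ‖g k u₁‖ ^ 2) :=
        Finset.sum_le_sum_of_subset_of_nonneg (Finset.subset_univ S) fun k _ _ ↦ by
          have := sub_nonneg.mpr (hw₁l k)
          positivity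

/-- Abstract (discretized) key estimate in the proof of Theorem 4 (linearized
monotonicity test for inclusions more conductive than the background). -/
theorem eit_linearized_test_estimate {H E : Type*} [AddCommGroup H] [Module ℝ H]
    [NormedAddCommGroup E] [InnerProductSpace ℝ E] {ι : Type*} [Fintype ι]
    (g : ι → H →ₗ[ℝ] E) (w₁ w₂ : ι → ℝ) (ℓ : H →ₗ[ℝ] ℝ) (u₁ u₂ : H)
    (hu₁ : ∀ v, ∑ k, w₁ k * ⟪g k u₁, g k v⟫ = ℓ v)
    (hu₂ : ∀ v, ∑ k, w₂ k * ⟪g k u₂, g k v⟫ = ℓ v)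
    (s₀ s_max c : ℝ) (hs₀ : 0 < s₀) (hsmax : 0 < s_max) (hc : 0 ≤ c)
    (hw₂ : ∀ k, w₂ k = s₀)
    (hw₁l : ∀ k, s₀ ≤ w₁ k) (hw₁u : ∀ k, w₁ k ≤ s_max)
    (S : Finset ι) (hS : ∀ k ∈ S, w₁ k - s₀ ≥ c) :
    ℓ u₂ - ℓ u₁ ≥ (s₀ * c / s_max) * ∑ k ∈ S, ‖g k u₂‖ ^ 2 :=
  eit_linearized_test_estimate_general g w₁ w₂ ℓ u₁ u₂ hu₁ hu₂ s₀ s_max c hs₀ hw₂ hw₁l hw₁u S hS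
end

section
/- Under the stated hypotheses, suppose s₀ > 0, c ≥ 0, the weight w₂ is constant equal to s₀, and the weight w₁ satisfies 0 ≤ w₁(k) ≤ s₀ for all k ∈ ι and w₁(k) ≤ s₀ − c for all k in a subset S ⊆ ι. Then ℓ(u₂) − ℓ(u₁) ≤ −c·∑_{k∈S} ‖g k u₂‖². -/
/-!
Expanding `0 ≤ B_{w₁}(u₁ - u₂, u₁ - u₂)` with the two weak equations gives
`ℓ u₂ - ℓ u₁ ≤ B_{w₁}(u₂, u₂) - B_{w₂}(u₂, u₂) = -∑ₖ (s₀ - w₁ k) ‖g k u₂‖²`,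
and every summand `s₀ - w₁ k` is nonnegative and at least `c` on `S`.
-/

open scoped RealInnerProductSpace

namespace LinearMap.BilinForm

variable {R H : Type*} [CommRing R] [LinearOrder R] [IsStrictOrderedRing R]
  [AddCommGroup H] [Module R H]

/-- The monotonicity inequality for the solutions of two variational problems with the same
right-hand side. -/
theorem sub_le_of_forall_apply_eq {B₁ B₂ : LinearMap.BilinForm R H} (hB₁ : B₁.IsPosSemidef)
    {ℓ : H →ₗ[R] R} {u₁ u₂ : H} (hu₁ : ∀ v, B₁ u₁ v = ℓ v) (hu₂ : ∀ v, B₂ u₂ v = ℓ v) :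
    ℓ u₂ - ℓ u₁ ≤ B₁ u₂ u₂ - B₂ u₂ u₂ := by
  have hdiff : B₁ (u₁ - u₂) (u₁ - u₂) = ℓ u₁ - 2 * ℓ u₂ + B₁ u₂ u₂ := by
    rw [map_sub, map_sub, LinearMap.sub_apply, LinearMap.sub_apply, hB₁.eq u₂ u₁, hu₁, hu₁]
    ring
  linarith [hB₁.nonneg (u₁ - u₂), hu₂ u₂]

end LinearMap.BilinForm

section WeightedInnerForm

variable {H E ι : Type*} [AddCommGroup H] [Module ℝ H] [NormedAddCommGroup E]
  [InnerProductSpace ℝ E] [Fintype ι]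

theorem weightedInnerForm_isPosSemidef (g : ι → H →ₗ[ℝ] E) {w : ι → ℝ} (hw : ∀ k, 0 ≤ w k) :
    (weightedInnerForm g w).IsPosSemidef where
  eq u v := by simp only [weightedInnerForm_apply, real_inner_comm]
  nonneg u := by
    rw [weightedInnerForm_apply_self]
    exact Finset.sum_nonneg fun k _ => mul_nonneg (hw k) (sq_nonneg _)

end WeightedInnerForm

theorem Finset.mul_sum_le_sum_mul_of_le {R ι : Type*} [Semiring R] [PartialOrder R]
    [IsOrderedRing R] [Fintype ι] {S : Finset ι} {c : R} {d a : ι → R}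
    (hd : ∀ k, 0 ≤ d k) (hdS : ∀ k ∈ S, c ≤ d k) (ha : ∀ k, 0 ≤ a k) :
    c * ∑ k ∈ S, a k ≤ ∑ k, d k * a k :=
  calc c * ∑ k ∈ S, a k = ∑ k ∈ S, c * a k := Finset.mul_sum _ _ _
    _ ≤ ∑ k ∈ S, d k * a k :=
      Finset.sum_le_sum fun k hk => mul_le_mul_of_nonneg_right (hdS k hk) (ha k)
    _ ≤ ∑ k, d k * a k :=
      Finset.sum_le_sum_of_subset_of_nonneg S.subset_univ fun k _ _ => mul_nonneg (hd k) (ha k)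

theorem eit_linearized_test_estimate_less_conductive_general {H E : Type*} [AddCommGroup H]
    [Module ℝ H] [NormedAddCommGroup E] [InnerProductSpace ℝ E] {ι : Type*} [Fintype ι]
    (g : ι → H →ₗ[ℝ] E) (w₁ w₂ : ι → ℝ) (ℓ : H →ₗ[ℝ] ℝ) (u₁ u₂ : H)
    (hu₁ : ∀ v, ∑ k, w₁ k * ⟪g k u₁, g k v⟫ = ℓ v)
    (hu₂ : ∀ v, ∑ k, w₂ k * ⟪g k u₂, g k v⟫ = ℓ v)
    (s₀ c : ℝ)
    (hw₂ : ∀ k, w₂ k = s₀)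
    (hw₁l : ∀ k, 0 ≤ w₁ k) (hw₁u : ∀ k, w₁ k ≤ s₀)
    (S : Finset ι) (hS : ∀ k ∈ S, w₁ k ≤ s₀ - c) :
    ℓ u₂ - ℓ u₁ ≤ -c * ∑ k ∈ S, ‖g k u₂‖ ^ 2 := by
  have hmono := LinearMap.BilinForm.sub_le_of_forall_apply_eq
    (weightedInnerForm_isPosSemidef g hw₁l)
    (B₂ := weightedInnerForm g w₂) (fun v => (weightedInnerForm_apply g w₁ u₁ v).trans (hu₁ v))
    (fun v => (weightedInnerForm_apply g w₂ u₂ v).trans (hu₂ v))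
  have hgap : c * ∑ k ∈ S, ‖g k u₂‖ ^ 2 ≤ ∑ k, (w₂ k - w₁ k) * ‖g k u₂‖ ^ 2 :=
    Finset.mul_sum_le_sum_mul_of_le (fun k => by linarith [hw₂ k, hw₁u k])
      (fun k hk => by linarith [hw₂ k, hS k hk]) (fun k => sq_nonneg _)
  simp only [weightedInnerForm_apply_self, sub_mul, Finset.sum_sub_distrib] at hmono hgap
  linarith

/-- Abstract (discretized) key estimate in the proof of Theorem 6 (linearized
monotonicity test for inclusions less conductive than the background). -/
theorem eit_linearized_test_estimate_less_conductive {H E : Type*} [AddCommGroup H]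
    [Module ℝ H] [NormedAddCommGroup E] [InnerProductSpace ℝ E] {ι : Type*} [Fintype ι]
    (g : ι → H →ₗ[ℝ] E) (w₁ w₂ : ι → ℝ) (ℓ : H →ₗ[ℝ] ℝ) (u₁ u₂ : H)
    (hu₁ : ∀ v, ∑ k, w₁ k * ⟪g k u₁, g k v⟫ = ℓ v)
    (hu₂ : ∀ v, ∑ k, w₂ k * ⟪g k u₂, g k v⟫ = ℓ v)
    (s₀ c : ℝ) (hs₀ : 0 < s₀) (hc : 0 ≤ c)
    (hw₂ : ∀ k, w₂ k = s₀)
    (hw₁l : ∀ k, 0 ≤ w₁ k) (hw₁u : ∀ k, w₁ k ≤ s₀)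
    (S : Finset ι) (hS : ∀ k ∈ S, w₁ k ≤ s₀ - c) :
    ℓ u₂ - ℓ u₁ ≤ -c * ∑ k ∈ S, ‖g k u₂‖ ^ 2 :=
  eit_linearized_test_estimate_less_conductive_general g w₁ w₂ ℓ u₁ u₂ hu₁ hu₂ s₀ c hw₂ hw₁l hw₁u S
    hS
end

section
/- Let A₁, …, A_N, B be real symmetric n×n matrices and δ ≥ 0. Suppose that for every s ∈ {1, …, N} the matrix A_s − B + 2δ·Id is not positive semidefinite (equivalently, the minimal eigenvalue of A_s − B is < −2δ). Then for every real symmetric matrix R with B ⪯ R and every real symmetric matrix R_δ with ‖R − R_δ‖ ≤ δ, there is no s ∈ {1, …, N} with R_δ ⪯ A_s + δ·Id. -/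
/-!
Work in the Loewner order. The noise bound `‖R - Rδ‖ ≤ δ` gives `R - Rδ ⪯ δ • 1`, because the
spectrum of a Hermitian matrix is bounded by its operator norm. If some `s` were marked, then
`B ⪯ R = Rδ + (R - Rδ) ⪯ (A s + δ • 1) + δ • 1`, i.e. `A s - B + 2δ • 1` would be positive
semidefinite, against the criterion.
-/

open scoped Matrix.Norms.L2Operator MatrixOrder

lemma Matrix.IsHermitian.le_smul_one_of_l2_opNorm_le {𝕜 n : Type*} [RCLike 𝕜] [Fintype n]
    [DecidableEq n] {M : Matrix n n 𝕜} (hM : M.IsHermitian) {δ : ℝ} (h : ‖M‖ ≤ δ) :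
    M ≤ δ • (1 : Matrix n n 𝕜) := by
  nontriviality Matrix n n 𝕜
  rw [← Algebra.algebraMap_eq_smul_one]
  refine le_algebraMap_of_spectrum_le (fun k hk => ?_) hM.isSelfAdjoint
  calc k ≤ ‖(k : 𝕜)‖ := by rw [RCLike.norm_ofReal]; exact le_abs_self k
    _ ≤ ‖M‖ := spectrum.norm_le_norm_of_mem (spectrum.algebraMap_mem 𝕜 hk)
    _ ≤ δ := h

theorem eit_resolution_guarantee_criterion_general {n N : ℕ}
    (A : Fin N → Matrix (Fin n) (Fin n) ℝ) (B : Matrix (Fin n) (Fin n) ℝ)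
    (δ : ℝ)
    (hcrit : ∀ s, ¬ (A s - B + (2 * δ) • (1 : Matrix (Fin n) (Fin n) ℝ)).PosSemidef) :
    ∀ R Rδ : Matrix (Fin n) (Fin n) ℝ, R.IsHermitian → Rδ.IsHermitian →
      (R - B).PosSemidef → ‖R - Rδ‖ ≤ δ →
      ¬ ∃ s, (A s + δ • (1 : Matrix (Fin n) (Fin n) ℝ) - Rδ).PosSemidef := by
  rintro R Rδ hR hRδ hBR hnoise ⟨s, hmarked⟩
  have hRRδ : R - Rδ ≤ δ • 1 := (hR.sub hRδ).le_smul_one_of_l2_opNorm_le hnoise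
  have hBA : B ≤ A s + (2 * δ) • 1 :=
    calc B ≤ R := Matrix.le_iff.mpr hBR
      _ = Rδ + (R - Rδ) := (add_sub_cancel Rδ R).symm
      _ ≤ (A s + δ • 1) + δ • 1 := add_le_add (Matrix.le_iff.mpr hmarked) hRRδ
      _ = A s + (2 * δ) • 1 := by module
  exact hcrit s (by simpa only [sub_add_eq_add_sub] using Matrix.le_iff.mp hBA)

/-- Abstract verification criterion of Theorem 3: if for every `s` the matrix
`A s − B + 2δ·Id` is not positive semidefinite, then in the anomaly-free case
(`B ⪯ R`) with noise level `δ` no resolution element is marked by the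
monotonicity test `R_δ ⪯ A s + δ·Id`. -/
theorem eit_resolution_guarantee_criterion {n N : ℕ}
    (A : Fin N → Matrix (Fin n) (Fin n) ℝ) (B : Matrix (Fin n) (Fin n) ℝ)
    (hA : ∀ s, (A s).IsHermitian) (hB : B.IsHermitian)
    (δ : ℝ) (hδ : 0 ≤ δ)
    (hcrit : ∀ s, ¬ (A s - B + (2 * δ) • (1 : Matrix (Fin n) (Fin n) ℝ)).PosSemidef) :
    ∀ R Rδ : Matrix (Fin n) (Fin n) ℝ, R.IsHermitian → Rδ.IsHermitian →
      (R - B).PosSemidef → ‖R - Rδ‖ ≤ δ →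
      ¬ ∃ s, (A s + δ • (1 : Matrix (Fin n) (Fin n) ℝ) - Rδ).PosSemidef :=
  eit_resolution_guarantee_criterion_general A B δ hcrit
end
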